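/- If M2 simulates M1 over AP (including the initial-state condition), and M2 ⊨ ψ for an ACTL* formula ψ over AP (meaning ψ holds at all initial states of M2), then M1 ⊨ ψ. -/
import Mathlib


mutual
/-- ACTL* state formulae. -/
inductive SF (A : Type) : Type where
  | tt : SF A
  | ff : SF A
  | atom (a : A) : SF A
  | natom (a : A) : SF A
  | and (ψ₁ ψ₂ : SF A) : SF A
  | or (ψ₁ ψ₂ : SF A) : SF A
  | all (φ : PF A) : SF A
/-- ACTL* path formulae. -/
inductive PF (A : Type) : Type where
  | st (ψ : SF A) : PF A
  | and (φ₁ φ₂ : PF A) : PF A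
  | or (φ₁ φ₂ : PF A) : PF A
  | next (φ : PF A) : PF A
  | until_ (φ₁ φ₂ : PF A) : PF A
end

def IsPath {S : Type} (tr : S → S → Prop) (π : ℕ → S) : Prop := ∀ i, tr (π i) (π (i+1))

mutual
/-- Satisfaction of ACTL* state formulae. -/
def sat {S A : Type} (tr : S → S → Prop) (L : S → Set A) : SF A → S → Prop
  | .tt, _ => True
  | .ff, _ => False
  | .atom a, s => a ∈ L s
  | .natom a, s => a ∉ L s
  | .and ψ₁ ψ₂, s => sat tr L ψ₁ s ∧ sat tr L ψ₂ s
  | .or ψ₁ ψ₂, s => sat tr L ψ₁ s ∨ sat tr L ψ₂ s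
  | .all φ, s => ∀ π : ℕ → S, IsPath tr π → π 0 = s → psat tr L φ π
/-- Satisfaction of ACTL* path formulae. -/
def psat {S A : Type} (tr : S → S → Prop) (L : S → Set A) : PF A → (ℕ → S) → Prop
  | .st ψ, π => sat tr L ψ (π 0)
  | .and φ₁ φ₂, π => psat tr L φ₁ π ∧ psat tr L φ₂ π
  | .or φ₁ φ₂, π => psat tr L φ₁ π ∨ psat tr L φ₂ π
  | .next φ, π => psat tr L φ (fun i => π (i+1))
  | .until_ φ₁ φ₂, π => ∃ j, psat tr L φ₂ (fun i => π (j+i)) ∧ ∀ i < j, psat tr L φ₁ (fun k => π (i+k))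
end

mutual
/-- Atomic propositions occurring in a state formula. -/
def props {A : Type} : SF A → Set A
  | .tt | .ff => ∅
  | .atom a | .natom a => {a}
  | .and ψ₁ ψ₂ | .or ψ₁ ψ₂ => props ψ₁ ∪ props ψ₂
  | .all φ => pprops φ
/-- Atomic propositions occurring in a path formula. -/
def pprops {A : Type} : PF A → Set A
  | .st ψ => props ψ
  | .and φ₁ φ₂ | .or φ₁ φ₂ | .until_ φ₁ φ₂ => pprops φ₁ ∪ pprops φ₂
  | .next φ => pprops φ
end

/-- R is a simulation over AP (label agreement and transition matching). -/
def IsSim {S1 S2 A : Type} (AP : Set A)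
    (tr1 : S1 → S1 → Prop) (L1 : S1 → Set A)
    (tr2 : S2 → S2 → Prop) (L2 : S2 → Set A)
    (R : S1 → S2 → Prop) : Prop :=
  ∀ s1 s2, R s1 s2 →
    (L1 s1 ∩ AP = L2 s2 ∩ AP) ∧
    (∀ s1', tr1 s1 s1' → ∃ s2', tr2 s2 s2' ∧ R s1' s2')


lemma path_lift {S1 S2 A : Type} {AP : Set A}
    {tr1 : S1 → S1 → Prop} {L1 : S1 → Set A}
    {tr2 : S2 → S2 → Prop} {L2 : S2 → Set A}
    {R : S1 → S2 → Prop} (hsim : IsSim AP tr1 L1 tr2 L2 R)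
    (π1 : ℕ → S1) (hπ : IsPath tr1 π1) (s2 : S2) (h0 : R (π1 0) s2) :
    ∃ π2 : ℕ → S2, IsPath tr2 π2 ∧ π2 0 = s2 ∧ ∀ i, R (π1 i) (π2 i) := by
  have step : ∀ i (t : S2), R (π1 i) t → ∃ t', tr2 t t' ∧ R (π1 (i+1)) t' :=
    fun i t h => (hsim _ _ h).2 _ (hπ i)
  let f : ∀ i : ℕ, {t : S2 // R (π1 i) t} := fun i =>
    Nat.rec ⟨s2, h0⟩ (fun i p => ⟨(step i p.1 p.2).choose,
      (step i p.1 p.2).choose_spec.2⟩) i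
  refine ⟨fun i => (f i).1, fun i => ?_, rfl, fun i => (f i).2⟩
  exact (step i (f i).1 (f i).2).choose_spec.1

mutual
theorem sat_sim {S1 S2 A : Type} {AP : Set A}
    {tr1 : S1 → S1 → Prop} {L1 : S1 → Set A}
    {tr2 : S2 → S2 → Prop} {L2 : S2 → Set A}
    {R : S1 → S2 → Prop} (hsim : IsSim AP tr1 L1 tr2 L2 R) :
    ∀ ψ : SF A, props ψ ⊆ AP → ∀ s1 s2, R s1 s2 → sat tr2 L2 ψ s2 → sat tr1 L1 ψ s1
  | .tt, _, _, _, _, _ => trivial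
  | .ff, _, _, _, _, h => h.elim
  | .atom a, hp, s1, s2, hR, h => by
      have ha : a ∈ AP := hp rfl
      have := (hsim _ _ hR).1
      have : a ∈ L1 s1 ∩ AP := this ▸ ⟨h, ha⟩
      exact this.1
  | .natom a, hp, s1, s2, hR, h => by
      have ha : a ∈ AP := hp rfl
      have heq := (hsim _ _ hR).1
      intro hmem
      exact h (((heq ▸ (⟨hmem, ha⟩ : a ∈ L1 s1 ∩ AP)) : a ∈ L2 s2 ∩ AP)).1
  | .and ψ₁ ψ₂, hp, s1, s2, hR, h =>
      ⟨sat_sim hsim ψ₁ (fun a ha => hp (Or.inl ha)) s1 s2 hR h.1,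
       sat_sim hsim ψ₂ (fun a ha => hp (Or.inr ha)) s1 s2 hR h.2⟩
  | .or ψ₁ ψ₂, hp, s1, s2, hR, h =>
      h.elim (fun h => Or.inl (sat_sim hsim ψ₁ (fun a ha => hp (Or.inl ha)) s1 s2 hR h))
        (fun h => Or.inr (sat_sim hsim ψ₂ (fun a ha => hp (Or.inr ha)) s1 s2 hR h))
  | .all φ, hp, s1, s2, hR, h => by
      intro π1 hπ1 hπ0
      obtain ⟨π2, hπ2, h20, hrel⟩ := path_lift hsim π1 hπ1 s2 (hπ0 ▸ hR)
      exact psat_sim hsim φ hp π1 π2 hrel (h π2 hπ2 h20)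

theorem psat_sim {S1 S2 A : Type} {AP : Set A}
    {tr1 : S1 → S1 → Prop} {L1 : S1 → Set A}
    {tr2 : S2 → S2 → Prop} {L2 : S2 → Set A}
    {R : S1 → S2 → Prop} (hsim : IsSim AP tr1 L1 tr2 L2 R) :
    ∀ φ : PF A, pprops φ ⊆ AP → ∀ π1 π2, (∀ i, R (π1 i) (π2 i)) →
      psat tr2 L2 φ π2 → psat tr1 L1 φ π1
  | .st ψ, hp, π1, π2, hrel, h => sat_sim hsim ψ hp (π1 0) (π2 0) (hrel 0) h
  | .and φ₁ φ₂, hp, π1, π2, hrel, h =>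
      ⟨psat_sim hsim φ₁ (fun a ha => hp (Or.inl ha)) π1 π2 hrel h.1,
       psat_sim hsim φ₂ (fun a ha => hp (Or.inr ha)) π1 π2 hrel h.2⟩
  | .or φ₁ φ₂, hp, π1, π2, hrel, h =>
      h.elim (fun h => Or.inl (psat_sim hsim φ₁ (fun a ha => hp (Or.inl ha)) π1 π2 hrel h))
        (fun h => Or.inr (psat_sim hsim φ₂ (fun a ha => hp (Or.inr ha)) π1 π2 hrel h))
  | .next φ, hp, π1, π2, hrel, h =>
      psat_sim hsim φ hp (fun i => π1 (i+1)) (fun i => π2 (i+1)) (fun i => hrel (i+1)) h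
  | .until_ φ₁ φ₂, hp, π1, π2, hrel, h => by
      obtain ⟨j, h2, h1⟩ := h
      exact ⟨j, psat_sim hsim φ₂ (fun a ha => hp (Or.inr ha)) _ _ (fun i => hrel (j+i)) h2,
        fun i hi => psat_sim hsim φ₁ (fun a ha => hp (Or.inl ha)) _ _
          (fun k => hrel (i+k)) (h1 i hi)⟩
end

theorem model_simulation_preserves_ACTLs {S1 S2 A : Type} (AP : Set A)
    (I1 : Set S1) (tr1 : S1 → S1 → Prop) (L1 : S1 → Set A)
    (I2 : Set S2) (tr2 : S2 → S2 → Prop) (L2 : S2 → Set A)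
    (hI1 : I1.Nonempty) (hI2 : I2.Nonempty)
    (hser1 : ∀ s, ∃ s', tr1 s s') (hser2 : ∀ s, ∃ s', tr2 s s')
    (R : S1 → S2 → Prop)
    (hinit : ∀ s1 ∈ I1, ∃ s2 ∈ I2, R s1 s2)
    (hsim : IsSim AP tr1 L1 tr2 L2 R)
    (ψ : SF A) (hψ : props ψ ⊆ AP)
    (h2 : ∀ s0 ∈ I2, sat tr2 L2 ψ s0) :
    ∀ s0 ∈ I1, sat tr1 L1 ψ s0 := by
  intro s0 hs0
  obtain ⟨s2, hs2, hR⟩ := hinit s0 hs0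
  exact sat_sim hsim ψ hψ s0 s2 hR (h2 s2 hs2)
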